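/- (Lemma 1.) Under Condition 1 and Assumption SA1, for every d ∈ ℕ and every x ∈ ℝⁿ: (V*_d(x) : [0,∞]) ≤ V*(x) ≤ xᵀP̄x. Moreover, for any infinite input sequences (u,i) with J(x,u,i) = V*(x), the solution satisfies φ(k,x,u,i) → 0 as k → ∞. -/

import Mathlib

/-!
Regard the stage cost plus the cost-to-go `yᵀPy` of the successor `y = Aᵢx + Bᵢu` as a
quadratic form in `(x, u)`. The Riccati operator `𝓡ᵢ(P)` is the Schur complement of its input
block, so `xᵀ𝓡ᵢ(P)x` is the minimum of that form over `u`; by induction `xᵀP_𝐢x` is at most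
the finite-horizon cost `J_d` (stage costs plus terminal cost `P̲`) of any trajectory driven by
the modes `𝐢`. Condition 1 says precisely that `xᵀP̲x` is at most the stage cost plus `yᵀP̲y`,
so `J_d` is nondecreasing in `d`. Along a trajectory of finite cost the stage costs are
summable and, the `Qᵢ` being uniformly positive definite, the state tends to `0`; so the
terminal cost vanishes in the limit, `J_d → J`, and `V*_d ≤ J`. Finally `V*(x) ≤ xᵀP̄x < ∞`
makes the cost of an optimal input finite.
-/

open Matrix Filter
open scoped ENNReal

/-- Data of a switched linear-quadratic problem with `M` modes,
state dimension `n` and continuous-input dimension `m`. -/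
structure SwitchedLQR (n m M : ℕ) where
  A : Fin M → Matrix (Fin n) (Fin n) ℝ
  B : Fin M → Matrix (Fin n) (Fin m) ℝ
  Q : Fin M → Matrix (Fin n) (Fin n) ℝ
  R : Fin M → Matrix (Fin m) (Fin m) ℝ

namespace SwitchedLQR

variable {n m M : ℕ}

/-- Stage cost `ℓ(x,u,i) = xᵀQᵢx + uᵀRᵢu`. -/
def ell (S : SwitchedLQR n m M) (x : Fin n → ℝ) (u : Fin m → ℝ) (i : Fin M) : ℝ :=
  x ⬝ᵥ ((S.Q i) *ᵥ x) + u ⬝ᵥ ((S.R i) *ᵥ u)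

/-- Riccati operator `𝓡ᵢ(P)`. -/
noncomputable def Ric (S : SwitchedLQR n m M) (i : Fin M)
    (P : Matrix (Fin n) (Fin n) ℝ) : Matrix (Fin n) (Fin n) ℝ :=
  S.Q i + (S.A i)ᵀ * P * S.A i -
    (S.A i)ᵀ * P * S.B i * (S.R i + (S.B i)ᵀ * P * S.B i)⁻¹ * ((S.B i)ᵀ * P * S.A i)

/-- `P_𝐢 = 𝓡_{i₀}(𝓡_{i₁}(⋯𝓡_{i_{d-1}}(P̲)⋯))` for a finite mode sequence `𝐢`. -/
noncomputable def Pseq (S : SwitchedLQR n m M) (Pund : Matrix (Fin n) (Fin n) ℝ)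
    (l : List (Fin M)) : Matrix (Fin n) (Fin n) ℝ :=
  l.foldr S.Ric Pund

/-- Solution `φ(k,x,u,i)` of the switched linear system. -/
def phi (S : SwitchedLQR n m M) (x : Fin n → ℝ) (u : ℕ → Fin m → ℝ) (is : ℕ → Fin M) :
    ℕ → Fin n → ℝ
  | 0 => x
  | k + 1 => S.A (is k) *ᵥ (phi S x u is k) + S.B (is k) *ᵥ (u k)

/-- Finite-horizon cost `J_d` with terminal cost matrix `P̲`. -/
noncomputable def Jd (S : SwitchedLQR n m M) (Pund : Matrix (Fin n) (Fin n) ℝ) (d : ℕ)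
    (x : Fin n → ℝ) (u : ℕ → Fin m → ℝ) (is : ℕ → Fin M) : ℝ :=
  (∑ k ∈ Finset.range d, S.ell (S.phi x u is k) (u k) (is k)) +
    (S.phi x u is d) ⬝ᵥ (Pund *ᵥ (S.phi x u is d))

/-- Infinite-horizon cost `J(x,u,i) ∈ [0,∞]`. -/
noncomputable def Jinf (S : SwitchedLQR n m M) (x : Fin n → ℝ) (u : ℕ → Fin m → ℝ)
    (is : ℕ → Fin M) : ℝ≥0∞ :=
  ∑' k : ℕ, ENNReal.ofReal (S.ell (S.phi x u is k) (u k) (is k))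

/-- Optimal value function `V*(x)`. -/
noncomputable def Vstar (S : SwitchedLQR n m M) (x : Fin n → ℝ) : ℝ≥0∞ :=
  ⨅ (u : ℕ → Fin m → ℝ) (is : ℕ → Fin M), S.Jinf x u is

/-- `V*_d(x)`: minimum over length-`d` mode sequences `𝐢` of `xᵀP_𝐢x`. -/
noncomputable def Vd (S : SwitchedLQR n m M) (Pund : Matrix (Fin n) (Fin n) ℝ) (d : ℕ)
    (x : Fin n → ℝ) : ℝ :=
  sInf {r : ℝ | ∃ l : List (Fin M), l.length = d ∧ r = x ⬝ᵥ ((S.Pseq Pund l) *ᵥ x)}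

/-- Condition 1: the LMI block matrix is positive semi-definite for every mode. -/
def Cond1 (S : SwitchedLQR n m M) (Pund : Matrix (Fin n) (Fin n) ℝ) : Prop :=
  ∀ i : Fin M,
    (Matrix.fromBlocks
      ((S.A i)ᵀ * Pund * S.A i - Pund + S.Q i) ((S.A i)ᵀ * Pund * S.B i)
      ((S.B i)ᵀ * Pund * S.A i) (S.R i + (S.B i)ᵀ * Pund * S.B i)).PosSemidef

/-- Assumption SA1. -/
def SA1 (S : SwitchedLQR n m M) (Pbar : Matrix (Fin n) (Fin n) ℝ) : Prop :=
  Pbar.PosDef ∧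
    ∀ x : Fin n → ℝ, ∃ (u : ℕ → Fin m → ℝ) (is : ℕ → Fin M),
      S.Jinf x u is = S.Vstar x ∧ S.Vstar x ≤ ENNReal.ofReal (x ⬝ᵥ (Pbar *ᵥ x))

/-- `H*_d(x)`. -/
noncomputable def HStar (S : SwitchedLQR n m M) (Pund : Matrix (Fin n) (Fin n) ℝ) (d : ℕ)
    (x : Fin n → ℝ) : Set ((Fin m → ℝ) × Fin M) :=
  {p | S.Vd Pund d x =
        S.ell x p.1 p.2 + S.Vd Pund (d - 1) (S.A p.2 *ᵥ x + S.B p.2 *ᵥ p.1)}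

/-- `F_d(x)`. -/
noncomputable def Fd (S : SwitchedLQR n m M) (Pund : Matrix (Fin n) (Fin n) ℝ) (d : ℕ)
    (x : Fin n → ℝ) : Set (Fin n → ℝ) :=
  {y | ∃ p ∈ S.HStar Pund d x, y = S.A p.2 *ᵥ x + S.B p.2 *ᵥ p.1}

end SwitchedLQR

open Topology

namespace Matrix

variable {ι : Type*} [Fintype ι]

theorem PosDef.exists_pos_mul_sq_norm_le {Q : Matrix ι ι ℝ} (hQ : Q.PosDef) :
    ∃ c > 0, ∀ x, c * ‖x‖ ^ 2 ≤ x ⬝ᵥ (Q *ᵥ x) := by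
  obtain ⟨c, hc, hle⟩ := (isCompact_sphere (0 : ι → ℝ) 1).exists_forall_le'
    (f := fun y => y ⬝ᵥ (Q *ᵥ y)) (by fun_prop) fun y hy => by
      simpa using hQ.dotProduct_mulVec_pos (ne_zero_of_mem_sphere one_ne_zero ⟨y, hy⟩)
  refine ⟨c, hc, fun x => ?_⟩
  rcases eq_or_ne x 0 with rfl | hx
  · simp
  have hxpos : 0 < ‖x‖ := norm_pos_iff.mpr hx
  have h := hle (‖x‖⁻¹ • x) (by simp [norm_smul, hxpos.ne'])
  simp only [mulVec_smul, dotProduct_smul, smul_dotProduct, smul_eq_mul] at h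
  rwa [← mul_assoc, ← sq, inv_pow, inv_mul_eq_div, le_div_iff₀ (by positivity)] at h

theorem PosSemidef.transpose_mul_mul_same {κ : Type*} [Fintype κ] {P : Matrix ι ι ℝ}
    (hP : P.PosSemidef) (B : Matrix ι κ ℝ) : (Bᵀ * P * B).PosSemidef := by
  simpa using hP.conjTranspose_mul_mul_same B

theorem IsHermitian.conjTranspose_transpose_mul_mul {κ κ' : Type*} {P : Matrix ι ι ℝ}
    (hP : P.IsHermitian) (A : Matrix ι κ ℝ) (B : Matrix ι κ' ℝ) :
    (Aᵀ * P * B)ᴴ = Bᵀ * P * A := by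
  simp [transpose_mul, (isHermitian_iff_isSymm.1 hP).eq, Matrix.mul_assoc]

theorem exists_pos_forall_mul_sq_norm_le {κ : Type*} [Finite κ] {Q : κ → Matrix ι ι ℝ}
    (hQ : ∀ i, (Q i).PosDef) : ∃ c > 0, ∀ i x, c * ‖x‖ ^ 2 ≤ x ⬝ᵥ (Q i *ᵥ x) := by
  choose c hc hle using fun i => (hQ i).exists_pos_mul_sq_norm_le
  -- the conjunct `0 < c₀` matters only when `κ` is empty
  obtain ⟨c₀, hc₀, hpos⟩ :=
    ((eventually_all.2 fun i => Ioo_mem_nhdsGT (hc i)).and self_mem_nhdsWithin).exists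
  exact ⟨c₀, hpos, fun i x => (mul_le_mul_of_nonneg_right (hc₀ i).2.le (by positivity)).trans
    (hle i x)⟩

end Matrix

namespace SwitchedLQR

variable {n m M : ℕ}

section Riccati

variable (S : SwitchedLQR n m M)

def step (i : Fin M) (x : Fin n → ℝ) (u : Fin m → ℝ) : Fin n → ℝ :=
  S.A i *ᵥ x + S.B i *ᵥ u

theorem ell_nonneg {i : Fin M} (hQ : (S.Q i).PosSemidef) (hR : (S.R i).PosSemidef)
    (x : Fin n → ℝ) (u : Fin m → ℝ) : 0 ≤ S.ell x u i :=
  add_nonneg (by simpa using hQ.dotProduct_mulVec_nonneg x)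
    (by simpa using hR.dotProduct_mulVec_nonneg u)

def costMatrix (i : Fin M) (P : Matrix (Fin n) (Fin n) ℝ) :
    Matrix (Fin n ⊕ Fin m) (Fin n ⊕ Fin m) ℝ :=
  fromBlocks (S.Q i + (S.A i)ᵀ * P * S.A i) ((S.A i)ᵀ * P * S.B i)
    ((S.B i)ᵀ * P * S.A i) (S.R i + (S.B i)ᵀ * P * S.B i)

theorem dotProduct_costMatrix_mulVec (i : Fin M) (P : Matrix (Fin n) (Fin n) ℝ)
    (x : Fin n → ℝ) (u : Fin m → ℝ) :
    (x ⊕ᵥ u) ⬝ᵥ (S.costMatrix i P *ᵥ (x ⊕ᵥ u)) =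
      S.ell x u i + S.step i x u ⬝ᵥ (P *ᵥ S.step i x u) := by
  simp only [costMatrix, fromBlocks_mulVec, sumElim_dotProduct_sumElim, ell, step,
    Sum.elim_comp_inl, Sum.elim_comp_inr, add_mulVec, mulVec_add, dotProduct_add,
    add_dotProduct, ← mulVec_mulVec, dotProduct_transpose_mulVec, dotProduct_comm (P *ᵥ _)]
  ring

variable {S} {i : Fin M} {P : Matrix (Fin n) (Fin n) ℝ}

theorem costMatrix_eq_fromBlocks (hP : P.IsHermitian) :
    S.costMatrix i P = fromBlocks (S.Q i + (S.A i)ᵀ * P * S.A i) ((S.A i)ᵀ * P * S.B i)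
      ((S.A i)ᵀ * P * S.B i)ᴴ (S.R i + (S.B i)ᵀ * P * S.B i) := by
  rw [hP.conjTranspose_transpose_mul_mul, costMatrix]

theorem Ric_eq_sub (hP : P.IsHermitian) :
    S.Ric i P = S.Q i + (S.A i)ᵀ * P * S.A i - (S.A i)ᵀ * P * S.B i *
      (S.R i + (S.B i)ᵀ * P * S.B i)⁻¹ * ((S.A i)ᵀ * P * S.B i)ᴴ := by
  rw [hP.conjTranspose_transpose_mul_mul, Ric]

theorem costMatrix_posSemidef (hQ : (S.Q i).PosSemidef) (hR : (S.R i).PosSemidef)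
    (hP : P.PosSemidef) : (S.costMatrix i P).PosSemidef := by
  refine .of_dotProduct_mulVec_nonneg ?_ fun z => ?_
  · rw [costMatrix_eq_fromBlocks hP.1]
    exact .fromBlocks (hQ.add (hP.transpose_mul_mul_same _)).1 rfl
      (hR.add (hP.transpose_mul_mul_same _)).1
  · rw [star_trivial, ← Sum.elim_comp_inl_inr z, dotProduct_costMatrix_mulVec]
    exact add_nonneg (S.ell_nonneg hQ hR _ _) (by simpa using hP.dotProduct_mulVec_nonneg _)

theorem Ric_posSemidef (hQ : (S.Q i).PosSemidef) (hR : (S.R i).PosDef) (hP : P.PosSemidef) :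
    (S.Ric i P).PosSemidef := by
  have hW := hR.add_posSemidef (hP.transpose_mul_mul_same (S.B i))
  have := hW.isUnit.invertible
  have h := S.costMatrix_posSemidef hQ hR.posSemidef hP
  rwa [costMatrix_eq_fromBlocks hP.1, PosDef.fromBlocks₂₂ _ _ hW, ← Ric_eq_sub hP.1] at h

theorem dotProduct_Ric_mulVec_le (hR : (S.R i).PosDef) (hP : P.PosSemidef)
    (x : Fin n → ℝ) (u : Fin m → ℝ) :
    x ⬝ᵥ (S.Ric i P *ᵥ x) ≤ S.ell x u i + S.step i x u ⬝ᵥ (P *ᵥ S.step i x u) := by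
  have hW := hR.add_posSemidef (hP.transpose_mul_mul_same (S.B i))
  have := hW.isUnit.invertible
  have h :=
    schur_complement_eq₂₂ (S.Q i + (S.A i)ᵀ * P * S.A i) ((S.A i)ᵀ * P * S.B i) x u hW.1
  rw [← costMatrix_eq_fromBlocks hP.1, ← Ric_eq_sub hP.1] at h
  simp only [star_trivial, ← dotProduct_mulVec, dotProduct_costMatrix_mulVec] at h
  have hsq := hW.posSemidef.dotProduct_mulVec_nonneg
    (((S.R i + (S.B i)ᵀ * P * S.B i)⁻¹ * ((S.A i)ᵀ * P * S.B i)ᴴ) *ᵥ x + u)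
  rw [star_trivial] at hsq
  linarith

theorem Pseq_posSemidef (hQ : ∀ i, (S.Q i).PosSemidef) (hR : ∀ i, (S.R i).PosDef)
    (hP : P.PosSemidef) : ∀ l : List (Fin M), (S.Pseq P l).PosSemidef
  | [] => hP
  | i :: l => Ric_posSemidef (hQ i) (hR i) (Pseq_posSemidef hQ hR hP l)

theorem dotProduct_mulVec_le_of_cond1 (hC : S.Cond1 P) (i : Fin M) (x : Fin n → ℝ)
    (u : Fin m → ℝ) :
    x ⬝ᵥ (P *ᵥ x) ≤ S.ell x u i + S.step i x u ⬝ᵥ (P *ᵥ S.step i x u) := by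
  have hsplit : S.costMatrix i P = fromBlocks ((S.A i)ᵀ * P * S.A i - P + S.Q i)
      ((S.A i)ᵀ * P * S.B i) ((S.B i)ᵀ * P * S.A i) (S.R i + (S.B i)ᵀ * P * S.B i) +
      fromBlocks P 0 0 0 := by
    rw [costMatrix, fromBlocks_add]
    congr 1 <;> abel
  have hP : (x ⊕ᵥ u) ⬝ᵥ (fromBlocks P 0 0 0 *ᵥ (x ⊕ᵥ u)) = x ⬝ᵥ (P *ᵥ x) := by
    simp [fromBlocks_mulVec]
  have hC := (hC i).dotProduct_mulVec_nonneg (x ⊕ᵥ u)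
  rw [star_trivial] at hC
  rw [← S.dotProduct_costMatrix_mulVec, hsplit, add_mulVec, dotProduct_add, hP]
  linarith

end Riccati

section Trajectory

variable (S : SwitchedLQR n m M) (x : Fin n → ℝ) (u : ℕ → Fin m → ℝ)
  (is : ℕ → Fin M) {P : Matrix (Fin n) (Fin n) ℝ}

theorem phi_zero : S.phi x u is 0 = x := rfl

theorem phi_succ (k : ℕ) : S.phi x u is (k + 1) = S.step (is k) (S.phi x u is k) (u k) := rfl

theorem phi_succ' (k : ℕ) :
    S.phi x u is (k + 1) =
      S.phi (S.step (is 0) x (u 0)) (fun j => u (j + 1)) (fun j => is (j + 1)) k := by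
  induction k with
  | zero => rfl
  | succ k ih => rw [phi_succ, ih, phi_succ]

theorem Jd_succ' (d : ℕ) :
    S.Jd P (d + 1) x u is = S.ell x (u 0) (is 0) +
      S.Jd P d (S.step (is 0) x (u 0)) (fun j => u (j + 1)) (fun j => is (j + 1)) := by
  simp only [Jd, Finset.sum_range_succ', phi_succ', phi_zero]
  ring

variable {S}

theorem dotProduct_Pseq_ofFn_mulVec_le_Jd (hQ : ∀ i, (S.Q i).PosSemidef)
    (hR : ∀ i, (S.R i).PosDef) (hP : P.PosSemidef) (d : ℕ) :
    x ⬝ᵥ (S.Pseq P (List.ofFn fun k : Fin d => is k) *ᵥ x) ≤ S.Jd P d x u is := by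
  induction d generalizing x u is with
  | zero => simp [Pseq, Jd, phi_zero]
  | succ d ih =>
    rw [List.ofFn_succ, Jd_succ']
    calc _ ≤ S.ell x (u 0) (is 0) + S.step (is 0) x (u 0) ⬝ᵥ
          (S.Pseq P (List.ofFn fun k : Fin d => is (k + 1)) *ᵥ S.step (is 0) x (u 0)) :=
          dotProduct_Ric_mulVec_le (hR _) (Pseq_posSemidef hQ hR hP _) x (u 0)
      _ ≤ _ := (add_le_add_iff_left _).2 (ih _ _ fun j => is (j + 1))

theorem Vd_le_Jd (hQ : ∀ i, (S.Q i).PosSemidef) (hR : ∀ i, (S.R i).PosDef)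
    (hP : P.PosSemidef) (d : ℕ) : S.Vd P d x ≤ S.Jd P d x u is := by
  refine csInf_le_of_le ⟨0, ?_⟩ ⟨_, List.length_ofFn, rfl⟩
    (dotProduct_Pseq_ofFn_mulVec_le_Jd x u is hQ hR hP d)
  rintro _ ⟨l, -, rfl⟩
  simpa using (Pseq_posSemidef hQ hR hP l).dotProduct_mulVec_nonneg x

theorem Jd_le_Jd_succ (hC : S.Cond1 P) (d : ℕ) : S.Jd P d x u is ≤ S.Jd P (d + 1) x u is := by
  have h := dotProduct_mulVec_le_of_cond1 hC (is d) (S.phi x u is d) (u d)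
  rw [← phi_succ] at h
  simp only [Jd, Finset.sum_range_succ]
  linarith

theorem monotone_Jd (hC : S.Cond1 P) : Monotone fun d => S.Jd P d x u is :=
  monotone_nat_of_le_succ (Jd_le_Jd_succ x u is hC)

theorem tendsto_Jd (hsum : Summable fun k => S.ell (S.phi x u is k) (u k) (is k))
    (hphi : Tendsto (S.phi x u is) atTop (𝓝 0)) :
    Tendsto (fun d => S.Jd P d x u is) atTop
      (𝓝 (∑' k, S.ell (S.phi x u is k) (u k) (is k))) := by
  have hterm : Tendsto (fun d => S.phi x u is d ⬝ᵥ (P *ᵥ S.phi x u is d)) atTop (𝓝 0) := by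
    have hcont : Continuous fun y : Fin n → ℝ => y ⬝ᵥ (P *ᵥ y) := by fun_prop
    simpa [Function.comp_def] using (hcont.tendsto 0).comp hphi
  simpa only [Jd, add_zero] using hsum.hasSum.tendsto_sum_nat.add hterm

theorem Jd_le_tsum (hC : S.Cond1 P)
    (hsum : Summable fun k => S.ell (S.phi x u is k) (u k) (is k))
    (hphi : Tendsto (S.phi x u is) atTop (𝓝 0)) (d : ℕ) :
    S.Jd P d x u is ≤ ∑' k, S.ell (S.phi x u is k) (u k) (is k) :=
  (monotone_Jd x u is hC).ge_of_tendsto (tendsto_Jd x u is hsum hphi) d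

theorem summable_ell_of_Jinf_ne_top (hQ : ∀ i, (S.Q i).PosSemidef)
    (hR : ∀ i, (S.R i).PosSemidef) (h : S.Jinf x u is ≠ ⊤) :
    Summable fun k => S.ell (S.phi x u is k) (u k) (is k) :=
  (ENNReal.summable_toReal h).congr fun _ =>
    ENNReal.toReal_ofReal (S.ell_nonneg (hQ _) (hR _) _ _)

theorem Jinf_eq_ofReal_tsum (hQ : ∀ i, (S.Q i).PosSemidef) (hR : ∀ i, (S.R i).PosSemidef)
    (hsum : Summable fun k => S.ell (S.phi x u is k) (u k) (is k)) :
    S.Jinf x u is = ENNReal.ofReal (∑' k, S.ell (S.phi x u is k) (u k) (is k)) :=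
  (ENNReal.ofReal_tsum_of_nonneg (fun _ => S.ell_nonneg (hQ _) (hR _) _ _) hsum).symm

theorem tendsto_phi_of_summable (hQ : ∀ i, (S.Q i).PosDef) (hR : ∀ i, (S.R i).PosSemidef)
    (hsum : Summable fun k => S.ell (S.phi x u is k) (u k) (is k)) :
    Tendsto (S.phi x u is) atTop (𝓝 0) := by
  obtain ⟨c, hc, hle⟩ := exists_pos_forall_mul_sq_norm_le hQ
  have hbound : ∀ k, ‖S.phi x u is k‖ ^ 2 ≤ c⁻¹ * S.ell (S.phi x u is k) (u k) (is k) := by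
    intro k
    rw [le_inv_mul_iff₀ hc]
    exact (hle _ _).trans
      (le_add_of_nonneg_right (by simpa using (hR _).dotProduct_mulVec_nonneg _))
  have hsq : Tendsto (fun k => ‖S.phi x u is k‖ ^ 2) atTop (𝓝 0) :=
    squeeze_zero (fun _ => by positivity) hbound
      (by simpa using hsum.tendsto_atTop_zero.const_mul c⁻¹)
  rw [tendsto_zero_iff_norm_tendsto_zero]
  simpa using hsq.sqrt

theorem tendsto_phi_of_Jinf_ne_top (hQ : ∀ i, (S.Q i).PosDef) (hR : ∀ i, (S.R i).PosSemidef)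
    (h : S.Jinf x u is ≠ ⊤) : Tendsto (S.phi x u is) atTop (𝓝 0) :=
  tendsto_phi_of_summable x u is hQ hR
    (summable_ell_of_Jinf_ne_top x u is (fun i => (hQ i).posSemidef) hR h)

theorem ofReal_Vd_le_Jinf (hQ : ∀ i, (S.Q i).PosDef) (hR : ∀ i, (S.R i).PosDef)
    (hP : P.PosSemidef) (hC : S.Cond1 P) (d : ℕ) :
    ENNReal.ofReal (S.Vd P d x) ≤ S.Jinf x u is := by
  by_cases htop : S.Jinf x u is = ⊤
  · simp [htop]
  have hQ' i := (hQ i).posSemidef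
  have hR' i := (hR i).posSemidef
  have hsum := summable_ell_of_Jinf_ne_top x u is hQ' hR' htop
  rw [Jinf_eq_ofReal_tsum x u is hQ' hR' hsum]
  exact ENNReal.ofReal_le_ofReal <| (Vd_le_Jd x u is hQ' hR hP d).trans <|
    Jd_le_tsum x u is hC hsum (tendsto_phi_of_Jinf_ne_top x u is hQ hR' htop) d

theorem ofReal_Vd_le_Vstar (hQ : ∀ i, (S.Q i).PosDef) (hR : ∀ i, (S.R i).PosDef)
    (hP : P.PosSemidef) (hC : S.Cond1 P) (d : ℕ) :
    ENNReal.ofReal (S.Vd P d x) ≤ S.Vstar x :=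
  le_iInf₂ fun u is => ofReal_Vd_le_Jinf x u is hQ hR hP hC d

end Trajectory

end SwitchedLQR

theorem stmt10_general {n m M : ℕ}
    (S : SwitchedLQR n m M)
    (hQ : ∀ i : Fin M, (S.Q i).PosDef) (hR : ∀ i : Fin M, (S.R i).PosDef)
    (Pund : Matrix (Fin n) (Fin n) ℝ) (hPund : Pund.PosSemidef)
    (hC : S.Cond1 Pund)
    (Pbar : Matrix (Fin n) (Fin n) ℝ) (hSA : S.SA1 Pbar) :
    ∀ (d : ℕ) (x : Fin n → ℝ),
      ENNReal.ofReal (S.Vd Pund d x) ≤ S.Vstar x ∧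
      S.Vstar x ≤ ENNReal.ofReal (x ⬝ᵥ (Pbar *ᵥ x)) ∧
      (∀ (u : ℕ → Fin m → ℝ) (is : ℕ → Fin M),
        S.Jinf x u is = S.Vstar x →
        Tendsto (fun k => S.phi x u is k) atTop (nhds 0)) := by
  intro d x
  obtain ⟨-, -, -, hVstar⟩ := hSA.2 x
  refine ⟨S.ofReal_Vd_le_Vstar x hQ hR hPund hC d, hVstar, fun u is hopt => ?_⟩
  refine SwitchedLQR.tendsto_phi_of_Jinf_ne_top x u is hQ (fun i => (hR i).posSemidef) ?_
  exact hopt ▸ ne_top_of_le_ne_top ENNReal.ofReal_ne_top hVstar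

/-- Lemma 1: under Condition 1 and Assumption SA1, for every `d`
and `x`: `V*_d(x) ≤ V*(x) ≤ xᵀP̄x` (in `[0,∞]`), and every pair of optimal
infinite input sequences drives the solution to `0`. -/
theorem stmt10 {n m M : ℕ} (hn : 0 < n) (hm : 0 < m) (hM : 0 < M)
    (S : SwitchedLQR n m M)
    (hQ : ∀ i : Fin M, (S.Q i).PosDef) (hR : ∀ i : Fin M, (S.R i).PosDef)
    (Pund : Matrix (Fin n) (Fin n) ℝ) (hPund : Pund.PosSemidef)
    (hC : S.Cond1 Pund)
    (Pbar : Matrix (Fin n) (Fin n) ℝ) (hSA : S.SA1 Pbar) :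
    ∀ (d : ℕ) (x : Fin n → ℝ),
      ENNReal.ofReal (S.Vd Pund d x) ≤ S.Vstar x ∧
      S.Vstar x ≤ ENNReal.ofReal (x ⬝ᵥ (Pbar *ᵥ x)) ∧
      (∀ (u : ℕ → Fin m → ℝ) (is : ℕ → Fin M),
        S.Jinf x u is = S.Vstar x →
        Tendsto (fun k => S.phi x u is k) atTop (nhds 0)) :=
  stmt10_general S hQ hR Pund hPund hC Pbar hSA
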